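/- Let n ≥ 2 and let S be a signed permutation matrix (each row and column has exactly one nonzero entry, equal to ±1). Suppose S satisfies: s_{i,j} = s_{i+1,j+1} for i,j < n; s_{i,n} = −s_{i+1,1} and s_{n,j} = −s_{1,j+1} for i,j < n; and s_{n,n} = s_{1,1}. Then A^{-1} S A has integer entries, where A is the n×n matrix with q on the diagonal, -p on the subdiagonal, and p in entry (1,n) (p, q positive reals with p ≠ q). -/

import Mathlib

/-!
Write `A = q • 1 - p • P`, where `P` is the negacyclic shift (`1` on the subdiagonal, `-1` in
the corner `(1,n)`). The hypotheses on `S` say exactly that `S P = P S`, so `S` commutes with `A`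
and `A⁻¹ S A = S`, whose entries are `0` and `±1`. (If `A` were singular, Mathlib's `A⁻¹` would be `0`.)
-/

/-- The matrix `A` with `q` on the diagonal, `-p` on the subdiagonal,
`p` in the top-right corner (entry `(1,n)`), and `0` elsewhere. -/
def tilingMatrix (p q : ℝ) (n : ℕ) : Matrix (Fin n) (Fin n) ℝ :=
  Matrix.of fun i j =>
    if (i : ℕ) = (j : ℕ) then q
    else if (i : ℕ) = (j : ℕ) + 1 then -p
    else if (i : ℕ) = 0 ∧ (j : ℕ) = n - 1 then p
    else 0

/-- A signed permutation matrix: all entries in `{0, ±1}`, with exactly one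
nonzero entry in each row and each column. -/
def IsSignedPerm {n : ℕ} (S : Matrix (Fin n) (Fin n) ℝ) : Prop :=
  (∀ i j, S i j = 0 ∨ S i j = 1 ∨ S i j = -1) ∧
    (∀ i, ∃! j, S i j ≠ 0) ∧ (∀ j, ∃! i, S i j ≠ 0)

namespace Matrix

variable {R : Type*} [Ring R] {n : ℕ}

variable (R n) in
def negacyclicShift : Matrix (Fin n) (Fin n) R :=
  of fun i j =>
    if (i : ℕ) = (j : ℕ) + 1 then 1
    else if (i : ℕ) = 0 ∧ (j : ℕ) = n - 1 then -1
    else 0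

theorem mul_negacyclicShift_apply (M : Matrix (Fin n) (Fin n) R) (i j : Fin n) :
    (M * negacyclicShift R n) i j =
      if h : (j : ℕ) + 1 < n then M i ⟨j + 1, h⟩ else -M i ⟨0, by omega⟩ := by
  rw [mul_apply]
  split_ifs with h
  · refine (Fintype.sum_eq_single ⟨j + 1, h⟩ fun k hk => ?_).trans (by simp [negacyclicShift])
    have hk : (k : ℕ) ≠ j + 1 := fun h' => hk (Fin.ext h')
    have hj : (j : ℕ) ≠ n - 1 := by omega
    simp [negacyclicShift, hk, hj]
  · have hj : (j : ℕ) = n - 1 := by omega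
    refine (Fintype.sum_eq_single ⟨0, by omega⟩ fun k hk => ?_).trans
      (by simp [negacyclicShift, hj])
    have hk : (k : ℕ) ≠ 0 := fun h' => hk (Fin.ext h')
    have hkj : (k : ℕ) ≠ j + 1 := by omega
    simp [negacyclicShift, hk, hkj]

theorem negacyclicShift_mul_apply (M : Matrix (Fin n) (Fin n) R) (i j : Fin n) :
    (negacyclicShift R n * M) i j =
      if h : 0 < (i : ℕ) then M ⟨i - 1, by omega⟩ j else -M ⟨n - 1, by omega⟩ j := by
  rw [mul_apply]
  split_ifs with h
  · have hi1 : (i : ℕ) = i - 1 + 1 := by omega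
    refine (Fintype.sum_eq_single ⟨i - 1, by omega⟩ fun k hk => ?_).trans
      (by simp [negacyclicShift, ← hi1])
    have hk : (i : ℕ) ≠ k + 1 := fun h' => hk (Fin.ext (by simp; omega))
    have hi : (i : ℕ) ≠ 0 := by omega
    simp [negacyclicShift, hk, hi]
  · have hi : (i : ℕ) = 0 := by omega
    refine (Fintype.sum_eq_single ⟨n - 1, by omega⟩ fun k hk => ?_).trans
      (by simp [negacyclicShift, hi])
    have hk : (k : ℕ) ≠ n - 1 := fun h' => hk (Fin.ext h')
    have hik : (i : ℕ) ≠ k + 1 := by omega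
    simp [negacyclicShift, hk, hik]

theorem commute_negacyclicShift (hn : 0 < n) {S : Matrix (Fin n) (Fin n) R}
    (h1 : ∀ i j : Fin n, ∀ hi : (i : ℕ) + 1 < n, ∀ hj : (j : ℕ) + 1 < n,
      S i j = S ⟨(i : ℕ) + 1, hi⟩ ⟨(j : ℕ) + 1, hj⟩)
    (h2 : ∀ i : Fin n, ∀ hi : (i : ℕ) + 1 < n,
      S i ⟨n - 1, by omega⟩ = -S ⟨(i : ℕ) + 1, hi⟩ ⟨0, hn⟩)
    (h3 : ∀ j : Fin n, ∀ hj : (j : ℕ) + 1 < n,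
      S ⟨n - 1, by omega⟩ j = -S ⟨0, hn⟩ ⟨(j : ℕ) + 1, hj⟩)
    (h4 : S ⟨n - 1, by omega⟩ ⟨n - 1, by omega⟩ = S ⟨0, hn⟩ ⟨0, hn⟩) :
    Commute S (negacyclicShift R n) := by
  show S * negacyclicShift R n = negacyclicShift R n * S
  ext ⟨i, hi⟩ ⟨j, hj⟩
  rw [mul_negacyclicShift_apply, negacyclicShift_mul_apply]
  rcases i with _ | i <;> by_cases hj' : j + 1 < n
  · simp [hj', h3 ⟨j, hj⟩ hj']
  · obtain rfl : j = n - 1 := by omega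
    simp [hj', h4]
  · simp [hj', h1 ⟨i, by omega⟩ ⟨j, hj⟩ hi hj']
  · obtain rfl : j = n - 1 := by omega
    simp [hj', h2 ⟨i, by omega⟩ hi]

theorem nonsing_inv_mul_mul_of_commute {m α : Type*} [Fintype m] [DecidableEq m] [CommRing α]
    {A S : Matrix m m α} (hSA : Commute S A) (hA : IsUnit A.det) : A⁻¹ * S * A = S := by
  rw [Matrix.mul_assoc, hSA.eq, nonsing_inv_mul_cancel_left _ _ hA]

end Matrix

theorem tilingMatrix_eq (p q : ℝ) {n : ℕ} (hn : 2 ≤ n) :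
    tilingMatrix p q n = q • 1 - p • Matrix.negacyclicShift ℝ n := by
  ext i j
  have hi := i.isLt
  simp only [tilingMatrix, Matrix.negacyclicShift, Matrix.of_apply, Matrix.sub_apply,
    Matrix.smul_apply, Matrix.one_apply, Fin.ext_iff, smul_eq_mul]
  split_ifs <;> first | omega | ring

open Matrix

theorem cyclic_signed_perm_stabilizes (p q : ℝ)
    (n : ℕ) (hn : 2 ≤ n) (S : Matrix (Fin n) (Fin n) ℝ) (hS : IsSignedPerm S)
    (h1 : ∀ i j : Fin n, ∀ hi : (i : ℕ) + 1 < n, ∀ hj : (j : ℕ) + 1 < n,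
      S i j = S ⟨(i : ℕ) + 1, hi⟩ ⟨(j : ℕ) + 1, hj⟩)
    (h2 : ∀ i : Fin n, ∀ hi : (i : ℕ) + 1 < n,
      S i ⟨n - 1, by omega⟩ = -S ⟨(i : ℕ) + 1, hi⟩ ⟨0, by omega⟩)
    (h3 : ∀ j : Fin n, ∀ hj : (j : ℕ) + 1 < n,
      S ⟨n - 1, by omega⟩ j = -S ⟨0, by omega⟩ ⟨(j : ℕ) + 1, hj⟩)
    (h4 : S ⟨n - 1, by omega⟩ ⟨n - 1, by omega⟩ = S ⟨0, by omega⟩ ⟨0, by omega⟩) :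
    ∀ i j, ∃ m : ℤ, ((tilingMatrix p q n)⁻¹ * S * tilingMatrix p q n) i j = (m : ℝ) := by
  intro i j
  have hSP : Commute S (negacyclicShift ℝ n) := commute_negacyclicShift (by omega) h1 h2 h3 h4
  have hSA : Commute S (tilingMatrix p q n) := by
    rw [tilingMatrix_eq p q hn]
    exact ((Commute.one_right S).smul_right q).sub_right (hSP.smul_right p)
  by_cases hA : IsUnit (tilingMatrix p q n).det
  · rw [nonsing_inv_mul_mul_of_commute hSA hA]
    rcases hS.1 i j with h | h | h <;> rw [h]
    exacts [⟨0, by norm_num⟩, ⟨1, by norm_num⟩, ⟨-1, by norm_num⟩]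
  · exact ⟨0, by simp [nonsing_inv_apply_not_isUnit _ hA]⟩
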